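/- Fix an integer m ≥ 1 and let a, b ∈ ℕ with a+b = m, a ≠ 0, b ≠ 0, and let d ∈ ℕ and c := d+m. Then S₁(E(a,b),E(c,d)) = 0. -/
import Mathlib


noncomputable section

/-- Extended factorial of a rational number: `q!` if `q` is a nonnegative integer,
and `0` otherwise. -/
def qfact (q : ℚ) : ℝ :=
  if q.den = 1 ∧ 0 ≤ q.num then (q.num.toNat).factorial else 0

/-- `(-1)^q` for an integer rational `q` (junk value `1` otherwise). -/
def qsign (q : ℚ) : ℝ := if q.den = 1 then (-1 : ℝ) ^ q.num else 1

/-- The triangle coefficient `Δ(j₁,j₂,j₃)`: defined by the factorial formula when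
`j₁+j₂+j₃ ∈ ℤ` and `|j₁-j₂| ≤ j₃ ≤ j₁+j₂` (the triangle condition), and `0` otherwise. -/
def cgDelta (j1 j2 j3 : ℚ) : ℝ :=
  if (j1 + j2 + j3).den = 1 ∧ |j1 - j2| ≤ j3 ∧ j3 ≤ j1 + j2 then
    Real.sqrt (qfact (j1 + j2 - j3) * qfact (j1 - j2 + j3) * qfact (-j1 + j2 + j3)
      / qfact (j1 + j2 + j3 + 1))
  else 0

/-- The main Clebsch–Gordan formula (used when `m₃ ≥ 0` and `j₁ ≥ j₂`).  Terms of the sum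
in which some factorial argument is not a nonnegative integer vanish, since `qfact` is then `0`
and division by zero is zero; the summation range contains all integers `r ≥ 0` with
`j₁+j₂-j₃-r ≥ 0`. -/
def CGmain (j1 m1 j2 m2 j3 m3 : ℚ) : ℝ :=
  cgDelta j1 j2 j3 * Real.sqrt (2 * (j3 : ℝ) + 1) *
    Real.sqrt (qfact (j1 + m1) * qfact (j1 - m1) * qfact (j2 + m2) * qfact (j2 - m2) *
      qfact (j3 + m3) * qfact (j3 - m3)) *
    ∑ r ∈ Finset.range ((j1 + j2 - j3).num.toNat + 1),
      (-1 : ℝ) ^ r /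
        ((r.factorial : ℝ) * qfact (j1 + j2 - j3 - (r : ℚ)) * qfact (j1 - m1 - (r : ℚ)) *
          qfact (j2 + m2 - (r : ℚ)) * qfact (j3 - j2 + m1 + (r : ℚ)) *
          qfact (j3 - j1 - m2 + (r : ℚ)))

/-- The Clebsch–Gordan coefficient `CG(j₁,m₁;j₂,m₂|j₃,m₃)`.  It vanishes unless
`m₁+m₂ = m₃`, `|mᵢ| ≤ jᵢ` and `jᵢ+mᵢ ∈ ℤ` for `i = 1,2,3`; when these hold it is given by
the main formula if `m₃ ≥ 0` and `j₁ ≥ j₂`, and extended by the symmetries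
`CG(j₁,m₁;j₂,m₂|j₃,m₃) = (-1)^{j₁+j₂-j₃} CG(j₁,-m₁;j₂,-m₂|j₃,-m₃)` (for `m₃ < 0`) and
`CG(j₁,m₁;j₂,m₂|j₃,m₃) = (-1)^{j₁+j₂-j₃} CG(j₂,m₂;j₁,m₁|j₃,m₃)` (for `j₁ < j₂`). -/
def CG (j1 m1 j2 m2 j3 m3 : ℚ) : ℝ :=
  if m1 + m2 = m3 ∧ |m1| ≤ j1 ∧ |m2| ≤ j2 ∧ |m3| ≤ j3
      ∧ (j1 + m1).den = 1 ∧ (j2 + m2).den = 1 ∧ (j3 + m3).den = 1 then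
    if 0 ≤ m3 then
      if j2 ≤ j1 then CGmain j1 m1 j2 m2 j3 m3
      else qsign (j1 + j2 - j3) * CGmain j2 m2 j1 m1 j3 m3
    else
      qsign (j1 + j2 - j3) *
        (if j2 ≤ j1 then CGmain j1 (-m1) j2 (-m2) j3 (-m3)
         else qsign (j1 + j2 - j3) * CGmain j2 (-m2) j1 (-m1) j3 (-m3))
  else 0

open scoped TensorProduct

/-- The standard sl(2)-module `V(a)` of highest weight `a`, realized on `Fin (a+1) → ℝ`. -/
abbrev Vn (a : ℕ) : Type := Fin (a + 1) → ℝ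

def sl2coefE (a k : ℕ) : ℝ :=
  Real.sqrt ((a / 2 : ℝ) * (a / 2 + 1) - ((a / 2 : ℝ) - k + 1) * ((a / 2 : ℝ) - k))

def sl2coefF (a k : ℕ) : ℝ :=
  Real.sqrt ((a / 2 : ℝ) * (a / 2 + 1) - ((a / 2 : ℝ) - k - 1) * ((a / 2 : ℝ) - k))

/-- Matrix of `E` on `V(a)`: the `l`-th basis vector is sent to `sl2coefE a l` times the
`(l-1)`-st one. -/
def matE (a : ℕ) : Matrix (Fin (a + 1)) (Fin (a + 1)) ℝ :=
  fun k l => if (k : ℕ) + 1 = (l : ℕ) then sl2coefE a (l : ℕ) else 0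

/-- Matrix of `H` on `V(a)`: diagonal with entries `a - 2l`. -/
def matH (a : ℕ) : Matrix (Fin (a + 1)) (Fin (a + 1)) ℝ :=
  fun k l => if k = l then (a : ℝ) - 2 * ((l : ℕ) : ℝ) else 0

/-- Matrix of `F` on `V(a)`: the `l`-th basis vector is sent to `sl2coefF a l` times the
`(l+1)`-st one. -/
def matF (a : ℕ) : Matrix (Fin (a + 1)) (Fin (a + 1)) ℝ :=
  fun k l => if (k : ℕ) = (l : ℕ) + 1 then sl2coefF a (l : ℕ) else 0

/-- The action of `e` on `V(a)`. -/
def opE (a : ℕ) : Vn a →ₗ[ℝ] Vn a := Matrix.toLin' (matE a)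
/-- The action of `h` on `V(a)`. -/
def opH (a : ℕ) : Vn a →ₗ[ℝ] Vn a := Matrix.toLin' (matH a)
/-- The action of `f` on `V(a)`. -/
def opF (a : ℕ) : Vn a →ₗ[ℝ] Vn a := Matrix.toLin' (matF a)

/-- The standard basis vector `v_k` of `V(a)`. -/
def bv (a : ℕ) (k : Fin (a + 1)) : Vn a := Pi.single k 1

/-- Matrix of the map `rho^{a,b}_s : V(b) → V(a)` defining the action of the basis element
`e_s` of `V(m)` on the uniserial `(sl(2) ⋉ V(m))`-module `E(a,b)`: the `j`-th basis vector of
`V(b)` is sent to `(-1)^j CG(a/2, a/2-i; b/2, -b/2+j | m/2, m/2-s)` times the `i`-th basis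
vector of `V(a)`, where `i = j + s + (a-b-m)/2` (and to `0` if this `i` is out of range). -/
def rhoMat (m a b s : ℕ) : Matrix (Fin (a + 1)) (Fin (b + 1)) ℝ :=
  fun i j =>
    if 2 * ((i : ℕ) : ℤ) = 2 * ((j : ℕ) : ℤ) + 2 * (s : ℤ) + (a : ℤ) - (b : ℤ) - (m : ℤ) then
      (-1 : ℝ) ^ (j : ℕ) *
        CG ((a : ℚ) / 2) ((a : ℚ) / 2 - ((i : ℕ) : ℚ)) ((b : ℚ) / 2)
          (-(b : ℚ) / 2 + ((j : ℕ) : ℚ)) ((m : ℚ) / 2) ((m : ℚ) / 2 - (s : ℚ))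
    else 0

/-- The map `rho^{a,b}_s : V(b) → V(a)`. -/
def rho (m a b s : ℕ) : Vn b →ₗ[ℝ] Vn a := Matrix.toLin' (rhoMat m a b s)

/-- `S₁(E(a,b), E(c,d)) ⊆ (V(a) ⊗ V(d)) × (V(b) ⊗ V(c))`: the degree-one part of the socle of
the `(sl(2) ⋉ V(m))`-module `E(a,b) ⊗ E(c,d)`, i.e. the pairs `(x,y)` with
`(id ⊗ rho^{c,d}_s) x + (rho^{a,b}_s ⊗ id) y = 0` for all `s = 0, …, m`. -/
def S1E (m a b c d : ℕ) :
    Submodule ℝ ((Vn a ⊗[ℝ] Vn d) × (Vn b ⊗[ℝ] Vn c)) :=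
  ⨅ (s : ℕ) (_ : s ≤ m), LinearMap.ker
    ((TensorProduct.map LinearMap.id (rho m c d s)) ∘ₗ (LinearMap.fst ℝ _ _)
      + (TensorProduct.map (rho m a b s) LinearMap.id) ∘ₗ (LinearMap.snd ℝ _ _))

/-- The diagonal action of an sl(2) generator `X` on `(V(a) ⊗ V(d)) × (V(b) ⊗ V(c))`. -/
def diagPair (a d b c : ℕ) (X : ∀ n, Vn n →ₗ[ℝ] Vn n) :
    ((Vn a ⊗[ℝ] Vn d) × (Vn b ⊗[ℝ] Vn c)) →ₗ[ℝ] ((Vn a ⊗[ℝ] Vn d) × (Vn b ⊗[ℝ] Vn c)) :=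
  LinearMap.prodMap
    (TensorProduct.map (X a) LinearMap.id + TensorProduct.map LinearMap.id (X d))
    (TensorProduct.map (X b) LinearMap.id + TensorProduct.map LinearMap.id (X c))

/-- `S ≅ V(μ)` as sl(2)-modules, where the ambient space `M` of `S` carries the sl(2)-action
`DE, DH, DF`: there is an injective linear map `V(μ) → M` with range `S` intertwining the
standard action on `V(μ)` with `DE, DH, DF`. -/
def IsoToV (μ : ℕ) {M : Type} [AddCommGroup M] [Module ℝ M]
    (DE DH DF : M →ₗ[ℝ] M) (S : Submodule ℝ M) : Prop :=
  ∃ ψ : Vn μ →ₗ[ℝ] M, Function.Injective ψ ∧ LinearMap.range ψ = S ∧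
    ψ ∘ₗ opE μ = DE ∘ₗ ψ ∧ ψ ∘ₗ opH μ = DH ∘ₗ ψ ∧ ψ ∘ₗ opF μ = DF ∘ₗ ψ

/-- The degree-`t` component of the tensor product of two chain modules whose sl(2)-socle
factors are `V(a 0), V(a 1), …` and `V(b 0), V(b 1), …`. -/
abbrev chainSpace (a b : ℕ → ℕ) (t : ℕ) : Type :=
  ∀ i : Fin (t + 1), Vn (a (i : ℕ)) ⊗[ℝ] Vn (b (t - (i : ℕ)))

/-- `S_t` for the tensor product of the chain modules `C(a 0, …, a l)` and `C(b 0, …, b l')`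
over `sl(2) ⋉ V(m)`: the set of tuples `(x_i)` in the degree-`t` component whose entries
outside the admissible index range vanish and which are annihilated by every `e_s`, i.e.
`(rho^{a_i,a_{i+1}}_s ⊗ id) x_{i+1} + (id ⊗ rho^{b_{t-i-1},b_{t-i}}_s) x_i = 0`
for all `0 ≤ s ≤ m` and all `i < t`. -/
def chainSt (m : ℕ) (a b : ℕ → ℕ) (l l' t : ℕ) : Submodule ℝ (chainSpace a b t) :=
  (⨅ (i : Fin (t + 1)) (_ : l < (i : ℕ) ∨ l' < t - (i : ℕ)),
    LinearMap.ker (LinearMap.proj (R := ℝ) i))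
  ⊓ ⨅ (s : ℕ) (_ : s ≤ m) (i : ℕ) (h : i < t), LinearMap.ker
      ((TensorProduct.map (rho m (a i) (a (i + 1)) s) LinearMap.id) ∘ₗ
          LinearMap.proj (R := ℝ) (⟨i + 1, by omega⟩ : Fin (t + 1))
        + (TensorProduct.map LinearMap.id (rho m (b (t - i - 1)) (b (t - i)) s)) ∘ₗ
          LinearMap.proj (R := ℝ) (⟨i, by omega⟩ : Fin (t + 1)))

/-- The diagonal action of an sl(2) generator `X` on the degree-`t` component. -/
def chainD (a b : ℕ → ℕ) (t : ℕ) (X : ∀ n, Vn n →ₗ[ℝ] Vn n) :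
    chainSpace a b t →ₗ[ℝ] chainSpace a b t :=
  LinearMap.pi fun i =>
    (TensorProduct.map (X (a (i : ℕ))) LinearMap.id
      + TensorProduct.map LinearMap.id (X (b (t - (i : ℕ))))) ∘ₗ LinearMap.proj (R := ℝ) i

/-- The componentwise sl(2)-action of a generator `X` on the direct sum `⊕_{k<K} V(f k)`. -/
def piOp (f : ℕ → ℕ) (K : ℕ) (X : ∀ n, Vn n →ₗ[ℝ] Vn n) :
    (∀ k : Fin K, Vn (f (k : ℕ))) →ₗ[ℝ] (∀ k : Fin K, Vn (f (k : ℕ))) :=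
  LinearMap.pi fun k => X (f (k : ℕ)) ∘ₗ LinearMap.proj (R := ℝ) k

/-- `S ≅ ⊕_{k<K} V(f k)` as sl(2)-modules (same convention as `IsoToV`). -/
def IsoToPi (f : ℕ → ℕ) (K : ℕ) {M : Type} [AddCommGroup M] [Module ℝ M]
    (DE DH DF : M →ₗ[ℝ] M) (S : Submodule ℝ M) : Prop :=
  ∃ ψ : (∀ k : Fin K, Vn (f (k : ℕ))) →ₗ[ℝ] M,
    Function.Injective ψ ∧ LinearMap.range ψ = S ∧
    ψ ∘ₗ piOp f K opE = DE ∘ₗ ψ ∧ ψ ∘ₗ piOp f K opH = DH ∘ₗ ψ ∧ ψ ∘ₗ piOp f K opF = DF ∘ₗ ψ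

section Aux

lemma qfact_natCast (n : ℕ) : qfact (n : ℚ) = n.factorial := by
  simp [qfact]

lemma qfact_eqn {q : ℚ} (n : ℕ) (h : q = (n : ℚ)) : qfact q = n.factorial := by
  rw [h, qfact_natCast]

lemma qfact_pos {q : ℚ} (n : ℕ) (h : q = (n : ℚ)) : 0 < qfact q := by
  rw [qfact_eqn n h]
  exact_mod_cast n.factorial_pos

lemma qfact_of_neg {q : ℚ} (h : q < 0) : qfact q = 0 := by
  rw [qfact, if_neg]
  rintro ⟨-, h2⟩
  exact absurd (Rat.num_nonneg.mp h2) (not_le.mpr h)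

lemma qsign_ne_zero (q : ℚ) : qsign q ≠ 0 := by
  unfold qsign
  split
  · exact zpow_ne_zero _ (by norm_num)
  · norm_num

lemma cgDelta_pos3 (a b m : ℕ) (hm : a + b = m) :
    0 < cgDelta ((a : ℚ)/2) ((b : ℚ)/2) ((m : ℚ)/2) := by
  subst hm
  have ha : (0:ℚ) ≤ a := Nat.cast_nonneg a
  have hb : (0:ℚ) ≤ b := Nat.cast_nonneg b
  unfold cgDelta
  rw [if_pos]
  · apply Real.sqrt_pos.mpr
    apply div_pos
    · rw [qfact_eqn 0 (by push_cast; ring), qfact_eqn a (by push_cast; ring),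
        qfact_eqn b (by push_cast; ring)]
      have := a.factorial_pos
      have := b.factorial_pos
      positivity
    · exact qfact_pos (a + b + 1) (by push_cast; ring)
  · refine ⟨?_, ?_, by push_cast; linarith⟩
    · rw [show (a:ℚ)/2 + (b:ℚ)/2 + ((a+b:ℕ):ℚ)/2 = ((a+b:ℕ):ℚ) by push_cast; ring]
      exact Rat.den_natCast _
    · rw [abs_le]
      constructor <;> push_cast <;> linarith

lemma cgDelta_pos1 (d m : ℕ) :
    0 < cgDelta (((d + m : ℕ) : ℚ)/2) ((d : ℚ)/2) ((m : ℚ)/2) := by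
  have hd : (0:ℚ) ≤ d := Nat.cast_nonneg d
  have hm : (0:ℚ) ≤ m := Nat.cast_nonneg m
  unfold cgDelta
  rw [if_pos]
  · apply Real.sqrt_pos.mpr
    apply div_pos
    · rw [qfact_eqn d (by push_cast; ring), qfact_eqn m (by push_cast; ring),
        qfact_eqn 0 (by push_cast; ring)]
      have := d.factorial_pos
      have := m.factorial_pos
      positivity
    · exact qfact_pos (d + m + 1) (by push_cast; ring)
  · refine ⟨?_, ?_, by push_cast; linarith⟩
    · rw [show ((d+m:ℕ):ℚ)/2 + (d:ℚ)/2 + (m:ℚ)/2 = ((d+m:ℕ):ℚ) by push_cast; ring]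
      exact Rat.den_natCast _
    · rw [abs_le]
      constructor <;> push_cast <;> linarith

lemma CGmain_pos3 (a b m p u s : ℕ) (hm : a + b = m) (hp : p ≤ a) (hu : u ≤ b)
    (hs : s + u = p + b) :
    0 < CGmain ((a : ℚ)/2) ((a : ℚ)/2 - p) ((b : ℚ)/2) (-(b : ℚ)/2 + u)
      ((m : ℚ)/2) ((m : ℚ)/2 - s) := by
  unfold CGmain
  apply mul_pos
  apply mul_pos
  apply mul_pos
  · exact cgDelta_pos3 a b m hm
  · apply Real.sqrt_pos.mpr
    positivity
  · apply Real.sqrt_pos.mpr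
    rw [qfact_eqn (a - p) (by rw [Nat.cast_sub hp]; ring),
      qfact_eqn p (by ring), qfact_eqn u (by ring),
      qfact_eqn (b - u) (by rw [Nat.cast_sub hu]; ring),
      qfact_eqn (a - p + u) (by
        have e1 : (s:ℚ) + u = p + b := by exact_mod_cast hs
        have e2 : (m:ℚ) = a + b := by exact_mod_cast hm.symm
        rw [Nat.cast_add, Nat.cast_sub hp]; linarith),
      qfact_eqn s (by
        have e1 : (s:ℚ) + u = p + b := by exact_mod_cast hs
        have e2 : (m:ℚ) = a + b := by exact_mod_cast hm.symm
        push_cast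
        linarith)]
    have h1 := (a-p).factorial_pos
    have h2 := p.factorial_pos
    have h3 := u.factorial_pos
    have h4 := (b-u).factorial_pos
    have h5 := (a-p+u).factorial_pos
    have h6 := s.factorial_pos
    positivity
  · rw [show (a:ℚ)/2 + (b:ℚ)/2 - (m:ℚ)/2 = ((0:ℕ):ℚ) by
      subst hm; push_cast; ring]
    rw [Rat.num_natCast]
    simp only [Int.toNat_natCast, zero_add, Finset.sum_range_one]
    rw [qfact_eqn 0 (by push_cast; ring),
      qfact_eqn p (by push_cast; ring),
      qfact_eqn u (by push_cast; ring),
      qfact_eqn (a - p) (by subst hm; rw [Nat.cast_sub hp]; push_cast; ring),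
      qfact_eqn (b - u) (by subst hm; rw [Nat.cast_sub hu]; push_cast; ring)]
    have h2 := p.factorial_pos
    have h3 := u.factorial_pos
    have h4 := (a-p).factorial_pos
    have h5 := (b-u).factorial_pos
    simp only [pow_zero, Nat.factorial_zero, Nat.cast_one]
    positivity

end Aux
section Aux2

lemma CGmain_ne1 (d m s j : ℕ) (hs : s ≤ m) (hj : j ≤ d) :
    CGmain (((d + m : ℕ) : ℚ)/2) (((d + m : ℕ) : ℚ)/2 - ((j + s : ℕ) : ℚ)) ((d : ℚ)/2)
      (-(d : ℚ)/2 + (j : ℚ)) ((m : ℚ)/2) ((m : ℚ)/2 - (s : ℚ)) ≠ 0 := by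
  unfold CGmain
  apply mul_ne_zero
  apply mul_ne_zero
  apply mul_ne_zero
  · exact (cgDelta_pos1 d m).ne'
  · refine (Real.sqrt_pos.mpr ?_).ne'
    positivity
  · refine (Real.sqrt_pos.mpr ?_).ne'
    rw [qfact_eqn (d + m - (j + s)) (by rw [Nat.cast_sub (by omega)]; push_cast; ring),
      qfact_eqn (j + s) (by push_cast; ring),
      qfact_eqn j (by push_cast; ring),
      qfact_eqn (d - j) (by rw [Nat.cast_sub hj]; push_cast; ring),
      qfact_eqn (m - s) (by rw [Nat.cast_sub hs]; push_cast; ring),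
      qfact_eqn s (by push_cast; ring)]
    have h1 := (d + m - (j + s)).factorial_pos
    have h2 := (j + s).factorial_pos
    have h3 := j.factorial_pos
    have h4 := (d - j).factorial_pos
    have h5 := (m - s).factorial_pos
    have h6 := s.factorial_pos
    positivity
  · rw [show ((d + m : ℕ) : ℚ)/2 + (d : ℚ)/2 - (m : ℚ)/2 = ((d : ℕ) : ℚ) by push_cast; ring]
    rw [Rat.num_natCast, Int.toNat_natCast]
    rw [Finset.sum_eq_single_of_mem j (Finset.mem_range.mpr (by omega))]
    · apply div_ne_zero (pow_ne_zero _ (by norm_num : (-1 : ℝ) ≠ 0))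
      rw [qfact_eqn (d - j) (by rw [Nat.cast_sub hj]),
        qfact_eqn s (by push_cast; ring),
        qfact_eqn 0 (by push_cast; ring),
        qfact_eqn (m - s) (by rw [Nat.cast_sub hs]; push_cast; ring),
        qfact_eqn 0 (by push_cast; ring)]
      have h1 := j.factorial_pos
      have h2 := (d - j).factorial_pos
      have h3 := s.factorial_pos
      have h4 := (m - s).factorial_pos
      positivity
    · intro r hr hrj
      rcases lt_or_gt_of_ne hrj with h | h
      · have h0 : qfact ((m : ℚ)/2 - ((d + m : ℕ) : ℚ)/2 - (-(d : ℚ)/2 + (j : ℚ)) + (r : ℚ))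
            = 0 := by
          apply qfact_of_neg
          have : (r : ℚ) < (j : ℚ) := by exact_mod_cast h
          push_cast
          linarith
        rw [h0]
        simp
      · have h0 : qfact ((d : ℚ)/2 + (-(d : ℚ)/2 + (j : ℚ)) - (r : ℚ)) = 0 := by
          apply qfact_of_neg
          have : (j : ℚ) < (r : ℚ) := by exact_mod_cast h
          linarith
        rw [h0]
        simp

lemma CG_A_ne (d m s j : ℕ) (hs : s ≤ m) (hj : j ≤ d) :
    CG (((d + m : ℕ) : ℚ)/2) (((d + m : ℕ) : ℚ)/2 - ((j + s : ℕ) : ℚ)) ((d : ℚ)/2)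
      (-(d : ℚ)/2 + (j : ℚ)) ((m : ℚ)/2) ((m : ℚ)/2 - (s : ℚ)) ≠ 0 := by
  have hdq : (j : ℚ) ≤ (d : ℚ) := by exact_mod_cast hj
  have hsq : (s : ℚ) ≤ (m : ℚ) := by exact_mod_cast hs
  have hd0 : (0 : ℚ) ≤ d := Nat.cast_nonneg d
  have hm0 : (0 : ℚ) ≤ m := Nat.cast_nonneg m
  have hj0 : (0 : ℚ) ≤ j := Nat.cast_nonneg j
  have hs0 : (0 : ℚ) ≤ s := Nat.cast_nonneg s
  have hj2j1 : (d : ℚ)/2 ≤ ((d + m : ℕ) : ℚ)/2 := by push_cast; linarith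
  unfold CG
  rw [if_pos]
  · rcases le_or_gt 0 ((m : ℚ)/2 - (s : ℚ)) with h1 | h1
    · rw [if_pos h1, if_pos hj2j1]
      exact CGmain_ne1 d m s j hs hj
    · rw [if_neg (not_le.mpr h1), if_pos hj2j1]
      apply mul_ne_zero (qsign_ne_zero _)
      rw [show -(((d + m : ℕ) : ℚ)/2 - ((j + s : ℕ) : ℚ))
            = ((d + m : ℕ) : ℚ)/2 - (((d - j) + (m - s) : ℕ) : ℚ) by
          rw [Nat.cast_add (d - j), Nat.cast_sub hj, Nat.cast_sub hs]; push_cast; ring,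
        show -(-(d : ℚ)/2 + (j : ℚ)) = -(d : ℚ)/2 + ((d - j : ℕ) : ℚ) by
          rw [Nat.cast_sub hj]; ring,
        show -((m : ℚ)/2 - (s : ℚ)) = (m : ℚ)/2 - ((m - s : ℕ) : ℚ) by
          rw [Nat.cast_sub hs]; ring]
      exact CGmain_ne1 d m (m - s) (d - j) (by omega) (by omega)
  · refine ⟨by push_cast; ring, ?_, ?_, ?_, ?_, ?_, ?_⟩
    · rw [abs_le]; constructor <;> push_cast <;> linarith
    · rw [abs_le]; constructor <;> push_cast <;> linarith
    · rw [abs_le]; constructor <;> push_cast <;> linarith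
    · rw [show ((d + m : ℕ) : ℚ)/2 + (((d + m : ℕ) : ℚ)/2 - ((j + s : ℕ) : ℚ))
          = ((d + m - (j + s) : ℕ) : ℚ) by rw [Nat.cast_sub (by omega)]; push_cast; ring]
      exact Rat.den_natCast _
    · rw [show (d : ℚ)/2 + (-(d : ℚ)/2 + (j : ℚ)) = ((j : ℕ) : ℚ) by push_cast; ring]
      exact Rat.den_natCast _
    · rw [show (m : ℚ)/2 + ((m : ℚ)/2 - (s : ℚ)) = ((m - s : ℕ) : ℚ) by
        rw [Nat.cast_sub hs]; push_cast; ring]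
      exact Rat.den_natCast _

lemma CG_B_ne (a b m p u s : ℕ) (hm : a + b = m) (hp : p ≤ a) (hu : u ≤ b)
    (hs : s + u = p + b) :
    CG ((a : ℚ)/2) ((a : ℚ)/2 - (p : ℚ)) ((b : ℚ)/2) (-(b : ℚ)/2 + (u : ℚ))
      ((m : ℚ)/2) ((m : ℚ)/2 - (s : ℚ)) ≠ 0 := by
  have hsm : s ≤ m := by omega
  have hpq : (p : ℚ) ≤ (a : ℚ) := by exact_mod_cast hp
  have huq : (u : ℚ) ≤ (b : ℚ) := by exact_mod_cast hu
  have hsq : (s : ℚ) ≤ (m : ℚ) := by exact_mod_cast hsm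
  have ha0 : (0 : ℚ) ≤ a := Nat.cast_nonneg a
  have hb0 : (0 : ℚ) ≤ b := Nat.cast_nonneg b
  have hm0 : (0 : ℚ) ≤ m := Nat.cast_nonneg m
  have hp0 : (0 : ℚ) ≤ p := Nat.cast_nonneg p
  have hu0 : (0 : ℚ) ≤ u := Nat.cast_nonneg u
  have hs0 : (0 : ℚ) ≤ s := Nat.cast_nonneg s
  have hmq : (a : ℚ) + b = m := by exact_mod_cast hm
  have hsq2 : (s : ℚ) + u = p + b := by exact_mod_cast hs
  unfold CG
  rw [if_pos]
  · rcases le_or_gt 0 ((m : ℚ)/2 - (s : ℚ)) with h1 | h1 <;>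
      rcases le_or_gt ((b : ℚ)/2) ((a : ℚ)/2) with h2 | h2
    · rw [if_pos h1, if_pos h2]
      exact (CGmain_pos3 a b m p u s hm hp hu hs).ne'
    · rw [if_pos h1, if_neg (not_le.mpr h2)]
      apply mul_ne_zero (qsign_ne_zero _)
      rw [show -(b : ℚ)/2 + (u : ℚ) = (b : ℚ)/2 - ((b - u : ℕ) : ℚ) by
          rw [Nat.cast_sub hu]; ring,
        show (a : ℚ)/2 - (p : ℚ) = -(a : ℚ)/2 + ((a - p : ℕ) : ℚ) by
          rw [Nat.cast_sub hp]; ring]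
      exact (CGmain_pos3 b a m (b - u) (a - p) s (by omega) (by omega) (by omega)
        (by omega)).ne'
    · rw [if_neg (not_le.mpr h1), if_pos h2]
      apply mul_ne_zero (qsign_ne_zero _)
      rw [show -((a : ℚ)/2 - (p : ℚ)) = (a : ℚ)/2 - ((a - p : ℕ) : ℚ) by
          rw [Nat.cast_sub hp]; ring,
        show -(-(b : ℚ)/2 + (u : ℚ)) = -(b : ℚ)/2 + ((b - u : ℕ) : ℚ) by
          rw [Nat.cast_sub hu]; ring,
        show -((m : ℚ)/2 - (s : ℚ)) = (m : ℚ)/2 - ((m - s : ℕ) : ℚ) by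
          rw [Nat.cast_sub hsm]; ring]
      exact (CGmain_pos3 a b m (a - p) (b - u) (m - s) hm (by omega) (by omega)
        (by omega)).ne'
    · rw [if_neg (not_le.mpr h1), if_neg (not_le.mpr h2)]
      apply mul_ne_zero (qsign_ne_zero _)
      apply mul_ne_zero (qsign_ne_zero _)
      rw [show -(-(b : ℚ)/2 + (u : ℚ)) = (b : ℚ)/2 - ((u : ℕ) : ℚ) by push_cast; ring,
        show -((a : ℚ)/2 - (p : ℚ)) = -(a : ℚ)/2 + ((p : ℕ) : ℚ) by push_cast; ring,
        show -((m : ℚ)/2 - (s : ℚ)) = (m : ℚ)/2 - ((m - s : ℕ) : ℚ) by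
          rw [Nat.cast_sub hsm]; ring]
      exact (CGmain_pos3 b a m u p (m - s) (by omega) hu hp (by omega)).ne'
  · refine ⟨by push_cast; linarith, ?_, ?_, ?_, ?_, ?_, ?_⟩
    · rw [abs_le]; constructor <;> push_cast <;> linarith
    · rw [abs_le]; constructor <;> push_cast <;> linarith
    · rw [abs_le]; constructor <;> push_cast <;> linarith
    · rw [show (a : ℚ)/2 + ((a : ℚ)/2 - (p : ℚ)) = ((a - p : ℕ) : ℚ) by
        rw [Nat.cast_sub hp]; push_cast; ring]
      exact Rat.den_natCast _
    · rw [show (b : ℚ)/2 + (-(b : ℚ)/2 + (u : ℚ)) = ((u : ℕ) : ℚ) by push_cast; ring]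
      exact Rat.den_natCast _
    · rw [show (m : ℚ)/2 + ((m : ℚ)/2 - (s : ℚ)) = ((m - s : ℕ) : ℚ) by
        rw [Nat.cast_sub hsm]; push_cast; ring]
      exact Rat.den_natCast _

end Aux2
section Aux3
set_option synthInstance.maxHeartbeats 1000000
set_option maxHeartbeats 1000000

/-- Pairing functional on a tensor product of pi types: `v ⊗ w ↦ v p * w q`. -/
def pairLM (n n' : ℕ) (p : Fin (n + 1)) (q : Fin (n' + 1)) :
    (Vn n ⊗[ℝ] Vn n') →ₗ[ℝ] ℝ :=
  TensorProduct.lift ((LinearMap.mul ℝ ℝ).compl₁₂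
    (LinearMap.proj (R := ℝ) p) (LinearMap.proj (R := ℝ) q))

@[simp] lemma pairLM_tmul (n n' : ℕ) (p : Fin (n + 1)) (q : Fin (n' + 1))
    (v : Vn n) (w : Vn n') : pairLM n n' p q (v ⊗ₜ w) = v p * w q := rfl

lemma pair_map_right (n n' n'' : ℕ) (M : Matrix (Fin (n'' + 1)) (Fin (n' + 1)) ℝ)
    (p : Fin (n + 1)) (i : Fin (n'' + 1)) (x : Vn n ⊗[ℝ] Vn n') :
    pairLM n n'' p i (TensorProduct.map LinearMap.id (Matrix.toLin' M) x)
      = ∑ j, M i j * pairLM n n' p j x := by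
  induction x using TensorProduct.induction_on with
  | zero =>
    rw [_root_.map_zero, _root_.map_zero]
    simp only [_root_.map_zero, mul_zero, Finset.sum_const_zero]
  | tmul v w =>
    simp only [TensorProduct.map_tmul, LinearMap.id_coe, id_eq, pairLM_tmul,
      Matrix.toLin'_apply, Matrix.mulVec, dotProduct, Finset.mul_sum]
    exact Finset.sum_congr rfl fun j _ => by ring
  | add z1 z2 h1 h2 =>
    rw [LinearMap.map_add, LinearMap.map_add, h1, h2, ← Finset.sum_add_distrib]
    exact Finset.sum_congr rfl fun j _ => by rw [LinearMap.map_add]; ring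

lemma pair_map_left (n n' n'' : ℕ) (M : Matrix (Fin (n'' + 1)) (Fin (n + 1)) ℝ)
    (p : Fin (n'' + 1)) (i : Fin (n' + 1)) (y : Vn n ⊗[ℝ] Vn n') :
    pairLM n'' n' p i (TensorProduct.map (Matrix.toLin' M) LinearMap.id y)
      = ∑ u, M p u * pairLM n n' u i y := by
  induction y using TensorProduct.induction_on with
  | zero =>
    rw [_root_.map_zero, _root_.map_zero]
    simp only [_root_.map_zero, mul_zero, Finset.sum_const_zero]
  | tmul v w =>
    simp only [TensorProduct.map_tmul, LinearMap.id_coe, id_eq, pairLM_tmul,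
      Matrix.toLin'_apply, Matrix.mulVec, dotProduct, Finset.sum_mul]
    exact Finset.sum_congr rfl fun j _ => by ring
  | add z1 z2 h1 h2 =>
    rw [LinearMap.map_add, LinearMap.map_add, h1, h2, ← Finset.sum_add_distrib]
    exact Finset.sum_congr rfl fun j _ => by rw [LinearMap.map_add]; ring

lemma tensor_eq_zero (n n' : ℕ) (x : Vn n ⊗[ℝ] Vn n')
    (h : ∀ p q, pairLM n n' p q x = 0) : x = 0 := by
  let B := (Pi.basisFun ℝ (Fin (n + 1))).tensorProduct (Pi.basisFun ℝ (Fin (n' + 1)))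
  have key : ∀ (pq : Fin (n + 1) × Fin (n' + 1)),
      pairLM n n' pq.1 pq.2 = (Finsupp.lapply pq : _ →ₗ[ℝ] ℝ) ∘ₗ (B.repr : _ →ₗ[ℝ] _) := by
    intro pq
    apply B.ext
    rintro ⟨p', q'⟩
    simp only [LinearMap.coe_comp, Function.comp_apply, LinearEquiv.coe_coe,
      Module.Basis.repr_self, Finsupp.lapply_apply, Finsupp.single_apply]
    rw [show B (p', q') = Pi.single p' 1 ⊗ₜ[ℝ] Pi.single q' 1 by
      simp [B, Module.Basis.tensorProduct_apply, Pi.basisFun_apply]]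
    rw [pairLM_tmul]
    rcases eq_or_ne (p', q') pq with he | he
    · rw [if_pos he]
      rw [Prod.ext_iff] at he
      obtain ⟨h1, h2⟩ := he
      rw [← h1, ← h2]
      simp
    · rw [if_neg he]
      rcases (not_and_or.mp (fun hc => he (Prod.ext hc.1 hc.2))) with hc | hc
      · rw [Pi.single_apply, if_neg (fun hh => hc hh.symm)]
        ring
      · rw [Pi.single_apply (i := q'), if_neg (fun hh => hc hh.symm)]
        ring
  have hr : B.repr x = 0 := by
    ext pq
    have hx := h pq.1 pq.2
    rw [key pq] at hx
    simpa using hx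
  simpa using congrArg B.repr.symm hr

end Aux3
section Aux4
set_option synthInstance.maxHeartbeats 1000000
set_option maxHeartbeats 1000000

lemma rhoMat_cd_zero (m d s : ℕ) (i : Fin (d + m + 1)) (j : Fin (d + 1))
    (h : (j : ℕ) + s ≠ (i : ℕ)) : rhoMat m (d + m) d s i j = 0 := by
  unfold rhoMat
  rw [if_neg]
  push_cast
  omega

lemma rhoMat_cd_ne (m d s : ℕ) (hs : s ≤ m) (i : Fin (d + m + 1)) (j : Fin (d + 1))
    (h : (j : ℕ) + s = (i : ℕ)) : rhoMat m (d + m) d s i j ≠ 0 := by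
  unfold rhoMat
  rw [if_pos (by push_cast; omega)]
  apply mul_ne_zero (pow_ne_zero _ (by norm_num : (-1 : ℝ) ≠ 0))
  rw [show (((i : ℕ) : ℕ) : ℚ) = (((j : ℕ) + s : ℕ) : ℚ) by exact_mod_cast h.symm]
  exact CG_A_ne d m s (j : ℕ) hs (by omega)

lemma rhoMat_ab_zero (m a b s : ℕ) (hab : a + b = m) (p : Fin (a + 1)) (u : Fin (b + 1))
    (h : s + (u : ℕ) ≠ (p : ℕ) + b) : rhoMat m a b s p u = 0 := by
  unfold rhoMat
  rw [if_neg]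
  push_cast
  omega

lemma rhoMat_ab_ne (m a b s : ℕ) (hab : a + b = m) (p : Fin (a + 1)) (u : Fin (b + 1))
    (h : s + (u : ℕ) = (p : ℕ) + b) : rhoMat m a b s p u ≠ 0 := by
  unfold rhoMat
  rw [if_pos (by push_cast; omega)]
  apply mul_ne_zero (pow_ne_zero _ (by norm_num : (-1 : ℝ) ≠ 0))
  exact CG_B_ne a b m (p : ℕ) (u : ℕ) s hab (by omega) (by omega) h

end Aux4

set_option maxHeartbeats 1000000 in
set_option synthInstance.maxHeartbeats 1000000 in
/-- Theorem 4.4(iii): for `E(a,b)` with `a+b = m`, `a,b ≠ 0`, and `E(d+m,d) = Z(d,1)*`: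
`S₁(E(a,b), E(d+m,d)) = 0`. -/
theorem S1_case_Z_decr (m a b d : ℕ) (hm : 1 ≤ m)
    (hab : a + b = m) (ha : a ≠ 0) (hb : b ≠ 0) :
    S1E m a b (d + m) d = ⊥ := by
  have ha1 : 1 ≤ a := Nat.pos_of_ne_zero ha
  have hb1 : 1 ≤ b := Nat.pos_of_ne_zero hb
  rw [Submodule.eq_bot_iff]
  rintro ⟨x, y⟩ hxy
  rw [S1E, Submodule.mem_iInf] at hxy
  have heq : ∀ s, s ≤ m → ∀ (p : Fin (a + 1)) (i : Fin (d + m + 1)),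
      (∑ j, rhoMat m (d + m) d s i j * pairLM a d p j x)
        + (∑ u, rhoMat m a b s p u * pairLM b (d + m) u i y) = 0 := by
    intro s hs p i
    have h1 := hxy s
    rw [Submodule.mem_iInf] at h1
    have h2 := h1 hs
    rw [LinearMap.mem_ker] at h2
    have h3 := congrArg (pairLM a (d + m) p i) h2
    simp only [LinearMap.add_apply, LinearMap.coe_comp, Function.comp_apply,
      LinearMap.fst_apply, LinearMap.snd_apply, _root_.map_zero, _root_.map_add, rho] at h3
    rw [pair_map_right a d (d + m) (rhoMat m (d + m) d s) p i x,
      pair_map_left b (d + m) a (rhoMat m a b s) p i y] at h3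
    exact h3
  have hX : ∀ (p : Fin (a + 1)) (q : Fin (d + 1)), pairLM a d p q x = 0 := by
    intro p q
    obtain ⟨s, hsm, hcol⟩ : ∃ s, s ≤ m ∧ ∀ un : ℕ, un ≤ b → un + s ≠ (p : ℕ) + b := by
      rcases Nat.eq_zero_or_pos (p : ℕ) with h0 | h0
      · exact ⟨b + 1, by omega, fun un hun => by omega⟩
      · exact ⟨(p : ℕ) - 1, by have := p.isLt; omega, fun un hun => by omega⟩
    have he := heq s hsm p ⟨(q : ℕ) + s, by have := q.isLt; omega⟩
    rw [Finset.sum_eq_zero (f := fun u => rhoMat m a b s p u * pairLM b (d + m) u _ y)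
      (fun u _ => mul_eq_zero_of_left
        (rhoMat_ab_zero m a b s hab p u
          (by have := u.isLt; have := hcol u (by omega); omega)) _)] at he
    rw [Finset.sum_eq_single_of_mem q (Finset.mem_univ q)
      (fun j _ hj => mul_eq_zero_of_left
        (rhoMat_cd_zero m d s _ j (by
          simp only
          intro hc
          exact hj (Fin.ext (by omega)))) _)] at he
    have h5 : rhoMat m (d + m) d s ⟨(q : ℕ) + s, by have := q.isLt; omega⟩ q
        * pairLM a d p q x = 0 := by linarith
    exact (mul_eq_zero.mp h5).resolve_left (rhoMat_cd_ne m d s hsm _ q rfl)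
  have hY : ∀ (u : Fin (b + 1)) (v : Fin (d + m + 1)), pairLM b (d + m) u v y = 0 := by
    intro u v
    have hsm : b - (u : ℕ) ≤ m := by omega
    have he := heq (b - (u : ℕ)) hsm ⟨0, by omega⟩ v
    rw [Finset.sum_eq_zero (f := fun j => rhoMat m (d + m) d (b - (u : ℕ)) v j
        * pairLM a d ⟨0, by omega⟩ j x)
      (fun j _ => mul_eq_zero_of_right _ (hX _ j))] at he
    rw [Finset.sum_eq_single_of_mem u (Finset.mem_univ u)
      (fun w _ hw => mul_eq_zero_of_left
        (rhoMat_ab_zero m a b (b - (u : ℕ)) hab _ w (by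
          simp only
          intro hc
          have := u.isLt
          have := w.isLt
          exact hw (Fin.ext (by omega)))) _)] at he
    have h5 : rhoMat m a b (b - (u : ℕ)) ⟨0, by omega⟩ u * pairLM b (d + m) u v y = 0 := by
      linarith
    exact (mul_eq_zero.mp h5).resolve_left
      (rhoMat_ab_ne m a b (b - (u : ℕ)) hab _ u (by simp only; omega))
  have hx0 : x = 0 := tensor_eq_zero a d x hX
  have hy0 : y = 0 := tensor_eq_zero b (d + m) y hY
  rw [hx0, hy0]
  rfl
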